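/- arXiv:2406.14369 — 3 statements merged into one kernel-verified Lean document; each statement's English description precedes it below -/
import Mathlib

section
/- Let (X,d,μ) be a space of homogeneous type with open balls and E ⊆ X non-empty such that the maximal hole function ρ_{d,E} is doubling. Then for every ball B = B_d(y,r) with B ∩ E ≠ ∅, and every x ∈ B \ closure(E), one has d(x,E) ≤ C₀·ρ_{d,E}(B), where C₀ = C_{d,E}^m with m the integer satisfying 2^{m-1} < K_d(2K_d+1) ≤ 2^m. -/
open MeasureTheory ENNReal Set

namespace WPA1

variable {X : Type*}

/-- `d` is a quasi-distance on `X` with triangular constant `K`. -/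
def QD (d : X → X → ℝ) (K : ℝ) : Prop :=
  1 ≤ K ∧ (∀ x y, 0 ≤ d x y) ∧ (∀ x y, d x y = 0 ↔ x = y) ∧
    (∀ x y, d x y = d y x) ∧ ∀ x y z, d x z ≤ K * (d x y + d y z)

/-- The `d`-ball of center `x` and radius `r`. -/
def ball (d : X → X → ℝ) (x : X) (r : ℝ) : Set X := {y | d x y < r}

/-- The optimal (least) triangular constant of `d`. -/
noncomputable def Kopt (d : X → X → ℝ) : ℝ := sInf {K | QD d K}

/-- Distance from a point to a set: `d(x,E) = inf_{e ∈ E} d(x,e)`. -/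
noncomputable def distE (d : X → X → ℝ) (E : Set X) (x : X) : ℝ :=
  sInf ((d x) '' E)

/-- The maximal `E`-free hole function
`ρ_{d,E}(B_d(x,r)) = sup {0 < s ≤ 2Kr : ∃ y, B_d(y,s) ⊆ B_d(x,r) \ E}`
(with value `0` when the set is empty, by `Real.sSup` conventions). -/
noncomputable def hole (d : X → X → ℝ) (K : ℝ) (E : Set X) (x : X) (r : ℝ) : ℝ :=
  sSup {s | 0 < s ∧ s ≤ 2 * K * r ∧ ∃ y, ball d y s ⊆ ball d x r \ E}

/-- The maximal hole function `ρ_{d,E}` is doubling with constant `C`. -/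
def HoleDoubling (d : X → X → ℝ) (K : ℝ) (E : Set X) (C : ℝ) : Prop :=
  ∀ x r, 0 < r → hole d K E x (2 * r) ≤ C * hole d K E x r

/-- The `d`-balls are open and form neighborhood bases: the ambient topology is
the one induced by the quasi-distance `d`. -/
def BallsBasis [TopologicalSpace X] (d : X → X → ℝ) : Prop :=
  (∀ x r, IsOpen (ball d x r)) ∧ ∀ x, ∀ U ∈ nhds x, ∃ r > 0, ball d x r ⊆ U

/-- The measure `μ` is doubling (with constant `A`) on `d`-balls, which have
positive finite measure; i.e. `(X,d,μ)` is a space of homogeneous type. -/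
def DoublingBalls [MeasurableSpace X] (μ : Measure X) (d : X → X → ℝ) (A : ℝ) : Prop :=
  ∀ x r, 0 < r → 0 < μ (ball d x r) ∧ μ (ball d x r) < ⊤ ∧
    μ (ball d x (2 * r)) ≤ ENNReal.ofReal A * μ (ball d x r)

/-- `E` is `(σ,γ)`-weakly porous with respect to `d` and `μ`. -/
def WeaklyPorousWith [MeasurableSpace X] (μ : Measure X) (d : X → X → ℝ) (K : ℝ)
    (E : Set X) (σ γ : ℝ) : Prop :=
  ∀ x r, 0 < r → ∃ (n : ℕ) (c : Fin n → X) (ρ : Fin n → ℝ),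
    (∀ i j, i ≠ j → Disjoint (ball d (c i) (ρ i)) (ball d (c j) (ρ j))) ∧
    (∀ i, ball d (c i) (ρ i) ⊆ ball d x r \ E) ∧
    (∀ i, γ * hole d K E x r ≤ ρ i) ∧
    (∀ i, ρ i ≤ 2 * K * r) ∧
    ENNReal.ofReal σ * μ (ball d x r) ≤ ∑ i, μ (ball d (c i) (ρ i))

/-- `E` is weakly porous with respect to `d` and `μ`. -/
def WeaklyPorous [MeasurableSpace X] (μ : Measure X) (d : X → X → ℝ) (K : ℝ)
    (E : Set X) : Prop :=
  ∃ σ γ : ℝ, σ ∈ Set.Ioo (0:ℝ) 1 ∧ γ ∈ Set.Ioo (0:ℝ) 1 ∧ WeaklyPorousWith μ d K E σ γ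

/-- The weight `d(·,E)^{-α}`, valued in `ℝ≥0∞` (so it is `∞` on `{d(·,E)=0}`). -/
noncomputable def wgt (d : X → X → ℝ) (E : Set X) (α : ℝ) (x : X) : ℝ≥0∞ :=
  ENNReal.ofReal (distE d E x) ^ (-α)

/-- `w` is an `A₁(X,d,μ)`-weight: `w` is locally integrable and the mean value of `w`
over every `d`-ball is bounded by a constant times its essential infimum there. -/
def MemA1 [MeasurableSpace X] (μ : Measure X) (d : X → X → ℝ) (w : X → ℝ≥0∞) : Prop :=
  (∀ x r, 0 < r → ∫⁻ y in ball d x r, w y ∂μ < ⊤) ∧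
  ∃ C : ℝ, 0 < C ∧ ∀ x r, 0 < r →
    ∫⁻ y in ball d x r, w y ∂μ ≤
      ENNReal.ofReal C * essInf w (μ.restrict (ball d x r)) * μ (ball d x r)


/-- If `ρ_{d,E}` is doubling and `B ∩ E ≠ ∅`, then `d(x,E) ≤ C_{d,E}^m ρ_{d,E}(B)`
for every `x ∈ B \ closure E`, where `2^{m-1} < K_d(2K_d+1) ≤ 2^m`. -/
theorem statement5 {X : Type*} [TopologicalSpace X] [MeasurableSpace X] [BorelSpace X]
    (μ : Measure X) (d : X → X → ℝ) (K A C : ℝ)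
    (hd : QD d K) (hb : BallsBasis d) (hA : DoublingBalls μ d A)
    (E : Set X) (hE : E.Nonempty) (hC : 0 < C) (hdbl : HoleDoubling d K E C)
    (m : ℕ) (hm1 : (2:ℝ) ^ ((m:ℤ) - 1) < K * (2 * K + 1))
    (hm2 : K * (2 * K + 1) ≤ (2:ℝ) ^ (m:ℤ))
    (y : X) (r : ℝ) (hr : 0 < r) (hBE : (ball d y r ∩ E).Nonempty)
    (x : X) (hx : x ∈ ball d y r \ closure E) :
    distE d E x ≤ C ^ m * hole d K E y r := by
  obtain ⟨K1, dnn, deq, dsymm, dtri⟩ := hd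
  obtain ⟨hxB, hxE⟩ := hx
  set R := distE d E x with hRdef
  -- R is positive
  obtain ⟨ε, hε, hball⟩ := hb.2 x _ (isClosed_closure.isOpen_compl.mem_nhds hxE)
  have hlb : ∀ e ∈ E, ε ≤ d x e := by
    intro e he
    by_contra h
    push_neg at h
    exact hball (show e ∈ ball d x ε from h) (subset_closure he)
  have hEne : ((d x) '' E).Nonempty := hE.image _
  have hRpos : 0 < R := lt_of_lt_of_le hε (le_csInf hEne (by rintro _ ⟨e, he, rfl⟩; exact hlb e he))
  have hRle : ∀ e ∈ E, R ≤ d x e := by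
    intro e he
    exact csInf_le ⟨0, by rintro _ ⟨e', _, rfl⟩; exact dnn x e'⟩ ⟨e, he, rfl⟩
  -- R < 2 K r
  obtain ⟨e₀, he₀B, he₀E⟩ := hBE
  have hdxy : d x y < r := by rw [dsymm]; exact hxB
  have hR2Kr : R < 2 * K * r := by
    have h1 : R ≤ d x e₀ := hRle e₀ he₀E
    have h2 : d x e₀ ≤ K * (d x y + d y e₀) := dtri x y e₀
    have h3 : d y e₀ < r := he₀B
    nlinarith
  have hpow : (2:ℝ) ^ (m:ℤ) = (2:ℝ) ^ m := zpow_natCast 2 m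
  have h2m1 : (1:ℝ) ≤ (2:ℝ) ^ m := one_le_pow₀ (by norm_num)
  -- the ball B(x,R) is a hole of the ball B(y, 2^m r)
  have hsub : ball d x R ⊆ ball d y ((2:ℝ) ^ m * r) \ E := by
    intro z hz
    have hz' : d x z < R := hz
    constructor
    · have h1 : d y z ≤ K * (d y x + d x z) := dtri y x z
      have h2 : d y x < r := hxB
      have h3 : K * (2 * K + 1) * r ≤ (2:ℝ) ^ m * r := by
        have := hm2; rw [hpow] at this; nlinarith
      show d y z < (2:ℝ) ^ m * r
      nlinarith
    · intro hzE
      exact absurd (hRle z hzE) (not_le.mpr hz')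
  have hRmem : R ∈ {s | 0 < s ∧ s ≤ 2 * K * ((2:ℝ) ^ m * r) ∧
      ∃ c, ball d c s ⊆ ball d y ((2:ℝ) ^ m * r) \ E} := by
    refine ⟨hRpos, ?_, x, hsub⟩
    nlinarith
  have hRhole : R ≤ hole d K E y ((2:ℝ) ^ m * r) :=
    le_csSup ⟨2 * K * ((2:ℝ) ^ m * r), fun s hs => hs.2.1⟩ hRmem
  -- iterate the doubling property
  have key : ∀ n : ℕ, hole d K E y ((2:ℝ) ^ n * r) ≤ C ^ n * hole d K E y r := by
    intro n
    induction n with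
    | zero => simp
    | succ n ih =>
      have h1 : (2:ℝ) ^ (n + 1) * r = 2 * ((2:ℝ) ^ n * r) := by ring
      rw [h1]
      calc hole d K E y (2 * ((2:ℝ) ^ n * r))
          ≤ C * hole d K E y ((2:ℝ) ^ n * r) := hdbl y _ (by positivity)
        _ ≤ C * (C ^ n * hole d K E y r) := by
            exact mul_le_mul_of_nonneg_left ih hC.le
        _ = C ^ (n + 1) * hole d K E y r := by ring
  exact hRhole.trans (key m)

end WPA1
end

section
/- Let (X,d,μ) be a space of homogeneous type and d̃ an equivalent quasi-distance with open balls, c₁d ≤ d̃ ≤ c₂d. If E ⊆ X is (σ,γ)-weakly porous with respect to d and ρ_{d,E} is doubling (with constant C_{d,E}), then E is (σ₀,γ₀)-weakly porous with respect to d̃ with γ₀ = (c₁γ)/(c₂ C_{d,E}^m) and σ₀ = σ/(A_{d̃} A_d)^m, where 2^{m-1} < c₂/c₁ ≤ 2^m and A_d, A_{d̃} are doubling constants of μ for d- and d̃-balls. -/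
open MeasureTheory ENNReal Set

namespace WPA1

variable {X : Type*}

/-! Put `R = r / c₂`, so that `B_d(x,R) ⊆ B_{d'}(x,r) ⊆ B_d(x,r/c₁) ⊆ B_d(x,2^m R)`.
If `B_{d'}(x,r)` has an `E`-free `d'`-hole of radius larger than `2K c₂ r / c₁`, a hole of almost
maximal radius contains the whole ball and is by itself a witness of porosity. Otherwise every
`d'`-hole of radius `s` contains a `d`-hole of radius `s / c₂` inside `B_d(x,2^m R)`, so doubling
of `ρ_{d,E}` gives `ρ_{d',E}(B_{d'}(x,r)) ≤ c₂ C^m ρ_{d,E}(B_d(x,R))`. The `d`-holes witnessing the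
porosity of `B_d(x,R)`, with radii multiplied by `c₁`, are then `d'`-holes of the required size,
and `m`-fold doubling of `μ` for `d`-balls and for `d'`-balls compares their measures. -/

section

variable {d d' : X → X → ℝ} {K K' : ℝ} {E : Set X}

lemma ball_mono (d : X → X → ℝ) (x : X) {r₁ r₂ : ℝ} (h : r₁ ≤ r₂) :
    ball d x r₁ ⊆ ball d x r₂ :=
  fun _ hy => lt_of_lt_of_le hy h

lemma ball_subset_ball_of_le_mul {c : ℝ} (hc : 0 < c) (h : ∀ x y, d' x y ≤ c * d x y)
    (x : X) (r : ℝ) : ball d x r ⊆ ball d' x (c * r) :=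
  fun z hz => (h x z).trans_lt (mul_lt_mul_of_pos_left hz hc)

lemma ball_subset_ball_of_mul_le {c : ℝ} (hc : 0 < c) (h : ∀ x y, c * d x y ≤ d' x y)
    (x : X) (r : ℝ) : ball d' x (c * r) ⊆ ball d x r :=
  fun z hz => (mul_lt_mul_iff_right₀ hc).mp ((h x z).trans_lt hz)

namespace QD

lemma mem_ball_self_of_mem (hd : QD d K) {x z : X} {r : ℝ} (hz : z ∈ ball d x r) :
    x ∈ ball d x r := by
  show d x x < r
  rw [(hd.2.2.1 x x).2 rfl]
  exact (hd.2.1 x z).trans_lt hz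

lemma mem_ball_self (hd : QD d K) (x : X) {r : ℝ} (hr : 0 < r) : x ∈ ball d x r := by
  show d x x < r
  rwa [(hd.2.2.1 x x).2 rfl]

lemma lt_of_mem_ball (hd : QD d K) {x y z : X} {r : ℝ} (hy : y ∈ ball d x r)
    (hz : z ∈ ball d x r) : d y z < 2 * K * r := by
  obtain ⟨hK, -, -, hsymm, htri⟩ := hd
  calc d y z ≤ K * (d y x + d x z) := htri y x z
    _ < K * (r + r) := by
        rw [hsymm y x]
        exact mul_lt_mul_of_pos_left (add_lt_add hy hz) (by linarith)
    _ = 2 * K * r := by ring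

lemma ball_min_eq (hd : QD d K) {x y : X} {r s : ℝ} (h : ball d y s ⊆ ball d x r) :
    ball d y (min s (2 * K * r)) = ball d y s :=
  (ball_mono d y (min_le_left _ _)).antisymm fun _ hz =>
    lt_min hz (hd.lt_of_mem_ball (h (hd.mem_ball_self_of_mem hz)) (h hz))

end QD

lemma hole_nonneg (d : X → X → ℝ) (K : ℝ) (E : Set X) (x : X) (r : ℝ) :
    0 ≤ hole d K E x r :=
  Real.sSup_nonneg fun _ hs => hs.1.le

lemma le_hole {x : X} {r s : ℝ} (h1 : 0 < s) (h2 : s ≤ 2 * K * r)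
    (h3 : ∃ y, ball d y s ⊆ ball d x r \ E) : s ≤ hole d K E x r :=
  le_csSup ⟨2 * K * r, fun _ ht => ht.2.1⟩ ⟨h1, h2, h3⟩

lemma hole_le {x : X} {r b : ℝ} (hb : 0 ≤ b)
    (H : ∀ s, 0 < s → s ≤ 2 * K * r → (∃ y, ball d y s ⊆ ball d x r \ E) → s ≤ b) :
    hole d K E x r ≤ b :=
  Real.sSup_le (fun s hs => H s hs.1 hs.2.1 hs.2.2) hb

lemma hole_le_two_mul (hK : 0 ≤ K) (x : X) {r : ℝ} (hr : 0 ≤ r) :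
    hole d K E x r ≤ 2 * K * r :=
  hole_le (by positivity) fun _ _ hs _ => hs

lemma hole_mono (hK : 0 ≤ K) (x : X) {r₁ r₂ : ℝ} (h : r₁ ≤ r₂) :
    hole d K E x r₁ ≤ hole d K E x r₂ :=
  hole_le (hole_nonneg d K E x r₂) fun _ h1 h2 h3 =>
    le_hole h1 (h2.trans (by gcongr)) <|
      h3.imp fun _ hy => hy.trans (Set.sdiff_subset_sdiff_left (ball_mono d x h))

lemma hole_two_pow_mul_le {C : ℝ} (hC : 0 ≤ C) (hdbl : HoleDoubling d K E C) (x : X) {R : ℝ}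
    (hR : 0 < R) (j : ℕ) : hole d K E x (2 ^ j * R) ≤ C ^ j * hole d K E x R := by
  induction j with
  | zero => simp
  | succ j ih =>
      calc hole d K E x (2 ^ (j + 1) * R) = hole d K E x (2 * (2 ^ j * R)) := by ring_nf
        _ ≤ C * hole d K E x (2 ^ j * R) := hdbl x _ (by positivity)
        _ ≤ C * (C ^ j * hole d K E x R) := by gcongr
        _ = C ^ (j + 1) * hole d K E x R := by ring

lemma hole_le_mul_hole_of_no_large_hole {c₂ : ℝ} (hc₂ : 0 < c₂)
    (hup : ∀ x y, d' x y ≤ c₂ * d x y) {x : X} {r R : ℝ} (hsub : ball d' x r ⊆ ball d x R)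
    (hnone : ∀ s, 0 < s → s ≤ 2 * K' * r → c₂ * (2 * K * R) < s →
      ∀ y, ¬ball d' y s ⊆ ball d' x r \ E) :
    hole d' K' E x r ≤ c₂ * hole d K E x R := by
  refine hole_le (mul_nonneg hc₂.le (hole_nonneg _ _ _ _ _)) fun s hs hsr ⟨y, hy⟩ => ?_
  have hB : ball d y (s / c₂) ⊆ ball d' y s := by
    simpa [mul_div_cancel₀ s hc₂.ne'] using ball_subset_ball_of_le_mul hc₂ hup y (s / c₂)
  have hsR : s ≤ c₂ * (2 * K * R) := not_lt.mp fun h => hnone s hs hsr h y hy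
  have : s / c₂ ≤ hole d K E x R :=
    le_hole (div_pos hs hc₂) (by rw [div_le_iff₀ hc₂]; linarith)
      ⟨y, hB.trans (hy.trans (Set.sdiff_subset_sdiff_left hsub))⟩
  rwa [div_le_iff₀' hc₂] at this

variable [MeasurableSpace X] {μ : Measure X}

lemma measure_ball_two_pow_mul_le {A : ℝ} (hA : DoublingBalls μ d A) (hA0 : 0 ≤ A) (x : X)
    {R : ℝ} (hR : 0 < R) (j : ℕ) :
    μ (ball d x (2 ^ j * R)) ≤ ENNReal.ofReal (A ^ j) * μ (ball d x R) := by
  induction j with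
  | zero => simp
  | succ j ih =>
      calc μ (ball d x (2 ^ (j + 1) * R)) = μ (ball d x (2 * (2 ^ j * R))) := by ring_nf
        _ ≤ ENNReal.ofReal A * μ (ball d x (2 ^ j * R)) := (hA x _ (by positivity)).2.2
        _ ≤ ENNReal.ofReal A * (ENNReal.ofReal (A ^ j) * μ (ball d x R)) := by gcongr
        _ = ENNReal.ofReal (A ^ (j + 1)) * μ (ball d x R) := by
            rw [← mul_assoc, ← ENNReal.ofReal_mul hA0, ← pow_succ']

lemma one_le_of_doublingBalls {A : ℝ} (hA : DoublingBalls μ d A) (x : X) : 1 ≤ A := by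
  obtain ⟨h0, hfin, hdb⟩ := hA x 1 one_pos
  have h : 1 * μ (ball d x 1) ≤ ENNReal.ofReal A * μ (ball d x 1) := by
    rw [one_mul]
    exact (measure_mono (ball_mono d x (by norm_num))).trans hdb
  exact ENNReal.one_le_ofReal.mp ((ENNReal.mul_le_mul_iff_left h0.ne' hfin.ne).mp h)

lemma ofReal_div_mul_le_of_le_mul {a b S : ℝ≥0∞} {σ α β : ℝ} (hα : 0 < α) (hβ : 0 < β)
    (hab : a ≤ ENNReal.ofReal α * b) (hbS : ENNReal.ofReal σ * b ≤ ENNReal.ofReal β * S) :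
    ENNReal.ofReal (σ / (β * α)) * a ≤ S := by
  have hσβ : ENNReal.ofReal (σ / (β * α)) * ENNReal.ofReal α =
      ENNReal.ofReal σ / ENNReal.ofReal β := by
    rw [← ENNReal.ofReal_mul' hα.le, ← ENNReal.ofReal_div_of_pos hβ]
    congr 1
    field_simp
  calc ENNReal.ofReal (σ / (β * α)) * a
      ≤ ENNReal.ofReal (σ / (β * α)) * (ENNReal.ofReal α * b) := by gcongr
    _ = ENNReal.ofReal σ * b / ENNReal.ofReal β := by
        rw [← mul_assoc, hσβ, ENNReal.mul_div_right_comm]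
    _ ≤ S := ENNReal.div_le_of_le_mul (by rwa [mul_comm S])

def PorousAt (μ : Measure X) (d : X → X → ℝ) (K : ℝ) (E : Set X) (σ γ : ℝ) (x : X) (r : ℝ) :
    Prop :=
  ∃ (n : ℕ) (c : Fin n → X) (ρ : Fin n → ℝ),
    (∀ i j, i ≠ j → Disjoint (ball d (c i) (ρ i)) (ball d (c j) (ρ j))) ∧
    (∀ i, ball d (c i) (ρ i) ⊆ ball d x r \ E) ∧
    (∀ i, γ * hole d K E x r ≤ ρ i) ∧
    (∀ i, ρ i ≤ 2 * K * r) ∧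
    ENNReal.ofReal σ * μ (ball d x r) ≤ ∑ i, μ (ball d (c i) (ρ i))

lemma weaklyPorousWith_iff {σ γ : ℝ} :
    WeaklyPorousWith μ d K E σ γ ↔ ∀ x r, 0 < r → PorousAt μ d K E σ γ x r :=
  Iff.rfl

lemma hole_pos_of_porousAt (hd : QD d K) {σ γ : ℝ} {x : X} {r : ℝ} (hμ : 0 < μ (ball d x r))
    (hσ : 0 < σ) (hp : PorousAt μ d K E σ γ x r) : 0 < hole d K E x r := by
  obtain ⟨n, c, ρ, -, hsub, -, hle, hmeas⟩ := hp
  have hsum : ∑ i, μ (ball d (c i) (ρ i)) ≠ 0 :=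
    (lt_of_lt_of_le (ENNReal.mul_pos (by simpa using hσ) hμ.ne') hmeas).ne'
  obtain ⟨i, -, hi⟩ := Finset.exists_ne_zero_of_sum_ne_zero hsum
  obtain ⟨z, hz⟩ := nonempty_of_measure_ne_zero hi
  have hρ : 0 < ρ i := (hd.2.1 (c i) z).trans_lt hz
  exact hρ.trans_le (le_hole hρ (hle i) ⟨c i, hsub i⟩)

lemma one_le_of_holeDoubling (hd : QD d K) {A σ γ C : ℝ} (hA : DoublingBalls μ d A) (hσ : 0 < σ)
    (hwp : WeaklyPorousWith μ d K E σ γ) (hdbl : HoleDoubling d K E C) (x : X) : 1 ≤ C := by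
  have h0 := hole_pos_of_porousAt hd (hA x 1 one_pos).1 hσ (hwp x 1 one_pos)
  have h1 : hole d K E x 1 ≤ hole d K E x (2 * 1) :=
    hole_mono (by linarith [hd.1]) x (by norm_num)
  nlinarith [hdbl x 1 one_pos]

lemma porousAt_of_large_hole (hd : QD d K) (hd' : QD d' K') {c₂ σ₀ γ₀ : ℝ} (hc₂ : 0 ≤ c₂)
    (hup : ∀ x y, d' x y ≤ c₂ * d x y) {x y : X} {r R s : ℝ}
    (hsub : ball d' x r ⊆ ball d x R) (hσ₀ : σ₀ ≤ 1) (hγ₀ : γ₀ < 1)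
    (hs : 0 < s) (hsr : s ≤ 2 * K' * r) (hbig : c₂ * (2 * K * R) < s)
    (hy : ball d' y s ⊆ ball d' x r \ E) : PorousAt μ d' K' E σ₀ γ₀ x r := by
  have hsH : s ≤ hole d' K' E x r := le_hole hs hsr ⟨y, hy⟩
  have hτ : max (γ₀ * hole d' K' E x r) (c₂ * (2 * K * R)) < hole d' K' E x r :=
    max_lt (by nlinarith) (hbig.trans_le hsH)
  obtain ⟨s', ⟨hs'0, hs'r, y', hy'⟩, hτs'⟩ :=
    exists_lt_of_lt_csSup (by exact ⟨s, hs, hsr, y, hy⟩) hτ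
  -- `c₂ * (2 * K * R)` bounds the `d'`-distance of any two points of `B_{d'}(x,r) ⊆ B_d(x,R)`
  have hcover : ball d' x r ⊆ ball d' y' s' := fun z hz => by
    have hy'x : y' ∈ ball d' x r := (hy' (hd'.mem_ball_self y' hs'0)).1
    calc d' y' z ≤ c₂ * d y' z := hup y' z
      _ ≤ c₂ * (2 * K * R) := by gcongr; exact (hd.lt_of_mem_ball (hsub hy'x) (hsub hz)).le
      _ < s' := (le_max_right _ _).trans_lt hτs'
  refine ⟨1, fun _ => y', fun _ => s', fun i j hij => absurd (Subsingleton.elim i j) hij,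
    fun _ => hy', fun _ => ((le_max_left _ _).trans_lt hτs').le, fun _ => hs'r, ?_⟩
  calc ENNReal.ofReal σ₀ * μ (ball d' x r) ≤ μ (ball d' x r) :=
        mul_le_of_le_one_left' (ENNReal.ofReal_le_one.mpr hσ₀)
    _ ≤ ∑ _i : Fin 1, μ (ball d' y' s') := by simpa using measure_mono hcover

lemma porousAt_of_porousAt_of_hole_le (hd' : QD d' K') {A A' c₁ c₂ σ γ γ₀ : ℝ}
    (hA : DoublingBalls μ d A) (hA' : DoublingBalls μ d' A') (hc₁ : 0 < c₁) (hc₂ : 0 < c₂)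
    (hlow : ∀ x y, c₁ * d x y ≤ d' x y) (hup : ∀ x y, d' x y ≤ c₂ * d x y) {m : ℕ}
    (h2m : c₂ ≤ 2 ^ m * c₁) {x : X} {r R : ℝ} (hr : 0 < r) (hR : 0 < R)
    (hsub : ball d x R ⊆ ball d' x r) (hsub' : ball d' x r ⊆ ball d x (2 ^ m * R))
    (hp : PorousAt μ d K E σ γ x R) (hpos : 0 < γ * hole d K E x R)
    (hγ₀ : γ₀ * hole d' K' E x r ≤ c₁ * (γ * hole d K E x R)) (hγ₀1 : γ₀ ≤ 1) :
    PorousAt μ d' K' E (σ / (A' * A) ^ m) γ₀ x r := by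
  obtain ⟨n, c, ρ, hdisj, hsubE, hlo, -, hmeas⟩ := hp
  have hρ : ∀ i, 0 < ρ i := fun i => hpos.trans_le (hlo i)
  have hB : ∀ i, ball d' (c i) (c₁ * ρ i) ⊆ ball d (c i) (ρ i) := fun i =>
    ball_subset_ball_of_mul_le hc₁ hlow (c i) (ρ i)
  have hcap : ∀ i,
      ball d' (c i) (min (c₁ * ρ i) (2 * K' * r)) = ball d' (c i) (c₁ * ρ i) := fun i =>
    hd'.ball_min_eq ((hB i).trans ((hsubE i).trans (sdiff_subset.trans hsub)))
  have hA1 := one_le_of_doublingBalls hA x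
  have hA'1 := one_le_of_doublingBalls hA' x
  have hμi : ∀ i, μ (ball d (c i) (ρ i)) ≤
      ENNReal.ofReal (A' ^ m) * μ (ball d' (c i) (c₁ * ρ i)) := fun i =>
    calc μ (ball d (c i) (ρ i)) ≤ μ (ball d' (c i) (2 ^ m * (c₁ * ρ i))) :=
          measure_mono ((ball_subset_ball_of_le_mul hc₂ hup (c i) (ρ i)).trans
            (ball_mono _ _ (by nlinarith [hρ i])))
      _ ≤ _ := measure_ball_two_pow_mul_le hA' (by linarith) (c i) (mul_pos hc₁ (hρ i)) m
  refine ⟨n, c, fun i => min (c₁ * ρ i) (2 * K' * r), fun i j hij => ?_, fun i => ?_,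
    fun i => ?_, fun i => min_le_right _ _, ?_⟩
  · rw [hcap, hcap]
    exact (hdisj i j hij).mono (hB i) (hB j)
  · rw [hcap]
    exact (hB i).trans ((hsubE i).trans (Set.sdiff_subset_sdiff_left hsub))
  · exact le_min (hγ₀.trans (mul_le_mul_of_nonneg_left (hlo i) hc₁.le))
      ((mul_le_of_le_one_left (hole_nonneg _ _ _ _ _) hγ₀1).trans
        (hole_le_two_mul (by linarith [hd'.1]) x hr.le))
  · simp only [hcap, mul_pow]
    refine ofReal_div_mul_le_of_le_mul (by positivity) (by positivity)
      ((measure_mono hsub').trans (measure_ball_two_pow_mul_le hA (by linarith) x hR m)) ?_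
    calc ENNReal.ofReal σ * μ (ball d x R) ≤ ∑ i, μ (ball d (c i) (ρ i)) := hmeas
      _ ≤ ∑ i, ENNReal.ofReal (A' ^ m) * μ (ball d' (c i) (c₁ * ρ i)) :=
          Finset.sum_le_sum fun i _ => hμi i
      _ = _ := (Finset.mul_sum ..).symm


lemma porousAt_of_no_large_hole (hd : QD d K) (hd' : QD d' K') {A A' C c₁ c₂ σ γ : ℝ}
    (hA : DoublingBalls μ d A) (hA' : DoublingBalls μ d' A') (hc₁ : 0 < c₁) (hc₂ : 0 < c₂)
    (hlow : ∀ x y, c₁ * d x y ≤ d' x y) (hup : ∀ x y, d' x y ≤ c₂ * d x y) {m : ℕ}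
    (h2m : c₂ ≤ 2 ^ m * c₁) (hC : 1 ≤ C) (hdbl : HoleDoubling d K E C) (hσ : 0 < σ)
    (hγ : 0 < γ) (hγ₀ : c₁ * γ / (c₂ * C ^ m) ≤ 1) {x : X} {r R R' : ℝ} (hr : 0 < r)
    (hR : 0 < R) (hRR' : R' ≤ 2 ^ m * R) (hsub : ball d x R ⊆ ball d' x r)
    (hsub' : ball d' x r ⊆ ball d x R') (hp : PorousAt μ d K E σ γ x R)
    (hnone : ∀ s, 0 < s → s ≤ 2 * K' * r → c₂ * (2 * K * R') < s →
      ∀ y, ¬ball d' y s ⊆ ball d' x r \ E) :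
    PorousAt μ d' K' E (σ / (A' * A) ^ m) (c₁ * γ / (c₂ * C ^ m)) x r := by
  have hhole : hole d' K' E x r ≤ c₂ * (C ^ m * hole d K E x R) :=
    calc hole d' K' E x r ≤ c₂ * hole d K E x R' :=
          hole_le_mul_hole_of_no_large_hole hc₂ hup hsub' hnone
      _ ≤ c₂ * hole d K E x (2 ^ m * R) := by
          gcongr; exact hole_mono (by linarith [hd.1]) x hRR'
      _ ≤ c₂ * (C ^ m * hole d K E x R) := by
          gcongr; exact hole_two_pow_mul_le (by linarith) hdbl x hR m
  refine porousAt_of_porousAt_of_hole_le hd' hA hA' hc₁ hc₂ hlow hup h2m hr hR hsub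
    (hsub'.trans (ball_mono d x hRR')) hp
    (mul_pos hγ (hole_pos_of_porousAt hd (hA x R hR).1 hσ hp)) ?_ hγ₀
  calc c₁ * γ / (c₂ * C ^ m) * hole d' K' E x r
      ≤ c₁ * γ / (c₂ * C ^ m) * (c₂ * (C ^ m * hole d K E x R)) := by gcongr
    _ = c₁ * (γ * hole d K E x R) := by field_simp

end

theorem statement8_general {X : Type*} [MeasurableSpace X]
    (μ : Measure X) (d d' : X → X → ℝ) (K K' A A' C c₁ c₂ σ γ : ℝ)
    (hd : QD d K) (hd' : QD d' K')
    (hA : DoublingBalls μ d A) (hA' : DoublingBalls μ d' A')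
    (hc₁ : 0 < c₁) (hc : c₁ ≤ c₂)
    (hlow : ∀ x y, c₁ * d x y ≤ d' x y) (hup : ∀ x y, d' x y ≤ c₂ * d x y)
    (E : Set X)
    (hσ : σ ∈ Set.Ioo (0:ℝ) 1) (hγ : γ ∈ Set.Ioo (0:ℝ) 1)
    (hwp : WeaklyPorousWith μ d K E σ γ)
    (hdbl : HoleDoubling d K E C)
    (m : ℕ) (hm2 : c₂ / c₁ ≤ (2:ℝ) ^ (m:ℤ)) :
    WeaklyPorousWith μ d' K' E (σ / (A' * A) ^ m) (c₁ * γ / (c₂ * C ^ m)) := by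
  refine weaklyPorousWith_iff.mpr fun x r hr => ?_
  obtain ⟨hσ0, hσ1⟩ := hσ
  obtain ⟨hγ0, hγ1⟩ := hγ
  have hc₂ : 0 < c₂ := hc₁.trans_le hc
  have h2m : c₂ ≤ 2 ^ m * c₁ := by rwa [zpow_natCast, div_le_iff₀ hc₁] at hm2
  have hC : 1 ≤ C := one_le_of_holeDoubling hd hA hσ0 hwp hdbl x
  have hA1 := one_le_of_doublingBalls hA x
  have hA'1 := one_le_of_doublingBalls hA' x
  have hγ₀ : c₁ * γ / (c₂ * C ^ m) < 1 := by
    rw [div_lt_one (by positivity)]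
    nlinarith [hγ1, one_le_pow₀ (n := m) hC]
  have hsub : ball d x (r / c₂) ⊆ ball d' x r := by
    simpa [mul_div_cancel₀ r hc₂.ne'] using ball_subset_ball_of_le_mul hc₂ hup x (r / c₂)
  have hsub' : ball d' x r ⊆ ball d x (r / c₁) := by
    simpa [mul_div_cancel₀ r hc₁.ne'] using ball_subset_ball_of_mul_le hc₁ hlow x (r / c₁)
  have hrR : r / c₁ ≤ 2 ^ m * (r / c₂) := by
    rw [div_le_iff₀ hc₁, mul_div_assoc', div_mul_eq_mul_div, le_div_iff₀ hc₂]
    nlinarith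
  by_cases hbig : ∃ s, 0 < s ∧ s ≤ 2 * K' * r ∧ c₂ * (2 * K * (r / c₁)) < s ∧
      ∃ y, ball d' y s ⊆ ball d' x r \ E
  · obtain ⟨s, hs, hsr, hsbig, y, hy⟩ := hbig
    have hσ₀ : σ / (A' * A) ^ m ≤ 1 :=
      div_le_one_of_le₀ (hσ1.le.trans (one_le_pow₀ (by nlinarith))) (by positivity)
    exact porousAt_of_large_hole hd hd' hc₂.le hup hsub' hσ₀ hγ₀ hs hsr hsbig hy
  · push Not at hbig
    exact porousAt_of_no_large_hole hd hd' hA hA' hc₁ hc₂ hlow hup h2m hC hdbl hσ0 hγ0 hγ₀.le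
      hr (by positivity) hrR hsub hsub' (hwp x (r / c₂) (by positivity)) hbig

/-- If `E` is `(σ,γ)`-weakly porous w.r.t. `d` and `ρ_{d,E}` is doubling (constant
`C_{d,E}`), then `E` is `(σ₀,γ₀)`-weakly porous w.r.t. an equivalent quasi-distance `d̃`,
with `γ₀ = c₁γ/(c₂ C_{d,E}^m)` and `σ₀ = σ/(A_{d̃} A_d)^m`, `2^{m-1} < c₂/c₁ ≤ 2^m`. -/
theorem statement8 {X : Type*} [TopologicalSpace X] [MeasurableSpace X] [BorelSpace X]
    (μ : Measure X) (d d' : X → X → ℝ) (K K' A A' C c₁ c₂ σ γ : ℝ)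
    (hd : QD d K) (hd' : QD d' K')
    (hopen : ∀ x r, IsOpen (ball d x r)) (hopen' : ∀ x r, IsOpen (ball d' x r))
    (hA : DoublingBalls μ d A) (hA' : DoublingBalls μ d' A')
    (hc₁ : 0 < c₁) (hc : c₁ ≤ c₂)
    (hlow : ∀ x y, c₁ * d x y ≤ d' x y) (hup : ∀ x y, d' x y ≤ c₂ * d x y)
    (E : Set X) (hE : E.Nonempty)
    (hσ : σ ∈ Set.Ioo (0:ℝ) 1) (hγ : γ ∈ Set.Ioo (0:ℝ) 1)
    (hwp : WeaklyPorousWith μ d K E σ γ)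
    (hC : 0 < C) (hdbl : HoleDoubling d K E C)
    (m : ℕ) (hm1 : (2:ℝ) ^ ((m:ℤ) - 1) < c₂ / c₁) (hm2 : c₂ / c₁ ≤ (2:ℝ) ^ (m:ℤ)) :
    WeaklyPorousWith μ d' K' E (σ / (A' * A) ^ m) (c₁ * γ / (c₂ * C ^ m)) :=
  statement8_general μ d d' K K' A A' C c₁ c₂ σ γ hd hd' hA hA' hc₁ hc hlow hup E hσ hγ hwp hdbl m
    hm2

end WPA1
end

section
/- Let (X,d,μ) be a space of homogeneous type with open balls and E ⊆ X non-empty. If d(·,E)^{-α} ∈ A₁(X,d,μ) for some α > 0, then ρ_{d,E}(B) > 0 for every d-ball B, and μ(closure(E)) = 0. -/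
open MeasureTheory ENNReal Set

namespace WPA1

variable {X : Type*}

/-!
On `closure E` the distance `d(·,E)` vanishes, so the weight `d(·,E)^{-α}` is identically `∞`
there; local integrability of the weight therefore forces `closure E` to be null in every ball,
hence null, since `X` is a countable union of balls. A ball of positive measure thus meets the
open set `(closure E)ᶜ`, and a small ball around such a point is an `E`-free hole.
-/

variable {d : X → X → ℝ}

theorem mem_ball_self (hdself : ∀ x, d x x = 0) (x : X) {r : ℝ} (hr : 0 < r) :
    x ∈ ball d x r := by
  simpa [ball, hdself x] using hr

theorem ball_subset_ball {x : X} {r s : ℝ} (h : r ≤ s) : ball d x r ⊆ ball d x s :=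
  fun _ hy => lt_of_lt_of_le hy h

theorem iUnion_ball_nat_add_one_eq_univ (x : X) : ⋃ n : ℕ, ball d x (n + 1) = univ := by
  refine eq_univ_of_forall fun y => mem_iUnion.mpr ?_
  obtain ⟨n, hn⟩ := exists_nat_gt (d x y)
  exact ⟨n, hn.trans (lt_add_one _)⟩

theorem distE_eq_zero_of_mem_closure [TopologicalSpace X] {E : Set X}
    (hd0 : ∀ x y, 0 ≤ d x y) (hdself : ∀ x, d x x = 0)
    (hopen : ∀ x r, IsOpen (ball d x r)) {y : X} (hy : y ∈ closure E) :
    distE d E y = 0 := by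
  refine le_antisymm (le_of_forall_pos_lt_add fun ε hε => ?_)
    (Real.sInf_nonneg (by rintro _ ⟨z, -, rfl⟩; exact hd0 y z))
  obtain ⟨z, hyz, hz⟩ :=
    mem_closure_iff.mp hy (ball d y ε) (hopen y ε) (mem_ball_self hdself y hε)
  have hbdd : BddBelow ((d y) '' E) := ⟨0, by rintro _ ⟨z, -, rfl⟩; exact hd0 y z⟩
  rw [zero_add]
  exact lt_of_le_of_lt (csInf_le hbdd ⟨z, hz, rfl⟩) hyz

theorem wgt_eq_top_of_distE_eq_zero {E : Set X} {α : ℝ} (hα : 0 < α) {y : X}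
    (hy : distE d E y = 0) : wgt d E α y = ⊤ := by
  rw [wgt, hy, ENNReal.ofReal_zero, ENNReal.zero_rpow_of_neg (neg_neg_of_pos hα)]

theorem measure_eq_zero_of_setLIntegral_lt_top_of_eqOn_top [MeasurableSpace X]
    {μ : Measure X} {f : X → ℝ≥0∞} {s : Set X} (hs : MeasurableSet s) (hf : EqOn f ⊤ s)
    (hint : ∫⁻ x in s, f x ∂μ < ⊤) : μ s = 0 := by
  rw [setLIntegral_congr_fun hs hf, Pi.top_def, setLIntegral_const] at hint
  by_contra h
  exact (ENNReal.top_mul h).not_lt hint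

theorem measure_closure_inter_ball_eq_zero [TopologicalSpace X] [MeasurableSpace X]
    [BorelSpace X] {μ : Measure X} {E : Set X} {α : ℝ} (hα : 0 < α)
    (hd0 : ∀ x y, 0 ≤ d x y) (hdself : ∀ x, d x x = 0)
    (hopen : ∀ x r, IsOpen (ball d x r)) {x : X} {r : ℝ}
    (hint : ∫⁻ y in ball d x r, wgt d E α y ∂μ < ⊤) :
    μ (closure E ∩ ball d x r) = 0 :=
  measure_eq_zero_of_setLIntegral_lt_top_of_eqOn_top
    (measurableSet_closure.inter (hopen x r).measurableSet)
    (fun _ hy => wgt_eq_top_of_distE_eq_zero hα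
      (distE_eq_zero_of_mem_closure hd0 hdself hopen hy.1))
    (lt_of_le_of_lt (lintegral_mono_set inter_subset_right) hint)

theorem measure_eq_zero_of_forall_inter_ball_eq_zero [MeasurableSpace X] {μ : Measure X}
    {S : Set X} (x : X) (h : ∀ r, 0 < r → μ (S ∩ ball d x r) = 0) : μ S = 0 := by
  rw [← inter_univ S, ← iUnion_ball_nat_add_one_eq_univ x, inter_iUnion]
  exact measure_iUnion_null fun n => h _ n.cast_add_one_pos

theorem hole_pos_of_not_subset_closure [TopologicalSpace X] (hb : BallsBasis d)
    {K : ℝ} (hK : 0 < K) {E : Set X} {x : X} {r : ℝ} (hr : 0 < r)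
    (hx : ¬ ball d x r ⊆ closure E) : 0 < hole d K E x r := by
  obtain ⟨z, hz, hzE⟩ := not_subset.mp hx
  obtain ⟨s, hs, hsub⟩ := hb.2 z ((closure E)ᶜ ∩ ball d x r)
    (Filter.inter_mem (isClosed_closure.isOpen_compl.mem_nhds hzE) ((hb.1 x r).mem_nhds hz))
  have hKr : 0 < 2 * K * r := by positivity
  have hmem : min s (2 * K * r) ∈
      {s | 0 < s ∧ s ≤ 2 * K * r ∧ ∃ y, ball d y s ⊆ ball d x r \ E} := by
    refine ⟨lt_min hs hKr, min_le_right _ _, z, fun y hy => ?_⟩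
    obtain ⟨hyE, hyx⟩ := hsub (ball_subset_ball (min_le_left _ _) hy)
    exact ⟨hyx, fun h => hyE (subset_closure h)⟩
  exact lt_of_lt_of_le (lt_min hs hKr) (le_csSup ⟨2 * K * r, fun _ ht => ht.2.1⟩ hmem)

/-- If `d(·,E)^{-α} ∈ A₁(X,d,μ)` for some `α > 0`, then `ρ_{d,E}(B) > 0` for every
`d`-ball `B`, and `μ(closure E) = 0`. -/
theorem statement9 {X : Type*} [TopologicalSpace X] [MeasurableSpace X] [BorelSpace X]
    (μ : Measure X) (d : X → X → ℝ) (K A : ℝ)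
    (hd : QD d K) (hb : BallsBasis d) (hA : DoublingBalls μ d A)
    (E : Set X) (hE : E.Nonempty)
    (α : ℝ) (hα : 0 < α) (hA1 : MemA1 μ d (wgt d E α)) :
    (∀ x r, 0 < r → 0 < hole d K E x r) ∧ μ (closure E) = 0 := by
  obtain ⟨hK, hd0, hdeq, -, -⟩ := hd
  have hdself : ∀ x, d x x = 0 := fun x => (hdeq x x).mpr rfl
  have hnull : ∀ x r, 0 < r → μ (closure E ∩ ball d x r) = 0 := fun x r hr =>
    measure_closure_inter_ball_eq_zero hα hd0 hdself hb.1 (hA1.1 x r hr)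
  refine ⟨fun x r hr => hole_pos_of_not_subset_closure hb (by linarith) hr fun hsub => ?_, ?_⟩
  · have hball := (hA x r hr).1
    rw [← hnull x r hr, inter_eq_right.mpr hsub] at hball
    exact hball.false
  · obtain ⟨e, -⟩ := hE
    exact measure_eq_zero_of_forall_inter_ball_eq_zero e (hnull e)

end WPA1
end
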